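/- For every subgraph H of G1 with maximum degree at most 3, the graph G1 − E(H) is not 3-choosable. -/
import Mathlib


/-- A graph `G` is `k`-choosable if for every assignment of lists of `k` colours to the
vertices there is a proper colouring choosing each vertex's colour from its list. -/
def Choosable {V : Type*} (G : SimpleGraph V) (k : ℕ) : Prop :=
  ∀ L : V → Finset ℕ, (∀ v, (L v).card = k) →
    ∃ φ : V → ℕ, (∀ v, φ v ∈ L v) ∧ ∀ ⦃u w : V⦄, G.Adj u w → φ u ≠ φ w

/-- The simple graph on `V` whose edges are the (symmetrized) pairs in the list `l`. -/
def graphOfList {V : Type*} (l : List (V × V)) : SimpleGraph V :=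
  SimpleGraph.fromRel (fun x y => (x, y) ∈ l)

/-- The graph `J3`, with vertices `a,…,k` encoded as `0,…,10`. -/
def J3 : SimpleGraph (Fin 11) :=
  graphOfList [(0,1),
    (0,2), (0,3), (0,4), (0,5), (0,6),
    (1,2), (1,3), (1,4), (1,5), (1,6),
    (2,3), (3,4), (4,5), (5,6),
    (7,0), (7,3), (7,4),
    (8,0), (8,4), (8,5),
    (9,1), (9,3), (9,4),
    (10,1), (10,4), (10,5)]

/-- The map placing the `t`-th copy of `J3` into `S`. -/
def mp (t : Fin 9) (m : Fin 11) : Sum (Fin 2) (Fin 9 × Fin 9) :=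
  if m.val = 0 then Sum.inl 0
  else if m.val = 1 then Sum.inl 1
  else Sum.inr (t, ⟨m.val - 2, by have := m.isLt; omega⟩)

/-- The graph `S`, obtained from nine copies of `J3` by identifying the nine edges
corresponding to `ab` into the single edge joining `Sum.inl 0` and `Sum.inl 1`. -/
def S : SimpleGraph (Sum (Fin 2) (Fin 9 × Fin 9)) :=
  SimpleGraph.fromRel (fun x y =>
    ∃ t : Fin 9, ∃ p q : Fin 11, J3.Adj p q ∧ x = mp t p ∧ y = mp t q)

/-- The map placing the `i`-th copy of `S` into `G1`. -/
def mg (i : Fin 4) :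
    Sum (Fin 2) (Fin 9 × Fin 9) → Sum (Sum Unit (Fin 4)) (Fin 4 × (Fin 9 × Fin 9))
  | Sum.inl j => if j = 0 then Sum.inl (Sum.inl ()) else Sum.inl (Sum.inr i)
  | Sum.inr p => Sum.inr (i, p)

/-- The graph `G1`, obtained from a star with center `u = Sum.inl (Sum.inl ())` and four
leaves `v i = Sum.inl (Sum.inr i)` by attaching, for each `i`, a copy of `S` whose handle
is identified with the edge `u (v i)`. -/
def G1 : SimpleGraph (Sum (Sum Unit (Fin 4)) (Fin 4 × (Fin 9 × Fin 9))) :=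
  SimpleGraph.fromRel (fun x y =>
    ∃ i : Fin 4, ∃ p q : Sum (Fin 2) (Fin 9 × Fin 9), S.Adj p q ∧ x = mg i p ∧ y = mg i q)

-- auxiliary
abbrev Vt := Sum (Sum Unit (Fin 4)) (Fin 4 × (Fin 9 × Fin 9))

def uu : Vt := Sum.inl (Sum.inl ())
def vv (i : Fin 4) : Vt := Sum.inl (Sum.inr i)
def W (i : Fin 4) (t : Fin 9) (m : Fin 11) : Vt := mg i (mp t m)

instance : DecidableRel J3.Adj := fun a b => by
  rw [J3, graphOfList]
  exact decidable_of_iff _ (SimpleGraph.fromRel_adj _ a b).symm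

lemma mp_inj (t : Fin 9) : Function.Injective (mp t) := by revert t; decide

set_option maxRecDepth 4000 in
lemma mg_inj (i : Fin 4) : Function.Injective (mg i) := by revert i; decide

lemma W_inj (i : Fin 4) (t : Fin 9) : Function.Injective (W i t) :=
  fun _ _ h => mp_inj t (mg_inj i h)

lemma W_zero (i t) : W i t 0 = uu := rfl
lemma W_one (i t) : W i t 1 = vv i := rfl

lemma W_inr (i t) (m : Fin 11) (h : 2 ≤ m.val) :
    W i t m = Sum.inr (i, (t, ⟨m.val - 2, by have := m.isLt; omega⟩)) := by
  unfold W mp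
  rw [if_neg (by omega), if_neg (by omega)]
  rfl

lemma liftAdj (i t) {m m' : Fin 11} (h : J3.Adj m m') :
    G1.Adj (W i t m) (W i t m') := by
  have hS : S.Adj (mp t m) (mp t m') := by
    rw [S, SimpleGraph.fromRel_adj]
    exact ⟨fun he => h.ne (mp_inj t he), Or.inl ⟨t, m, m', h, rfl, rfl⟩⟩
  rw [G1, SimpleGraph.fromRel_adj]
  exact ⟨fun he => h.ne (W_inj i t he), Or.inl ⟨i, _, _, hS, rfl, rfl⟩⟩

lemma card3 {a b c : ℕ} (hab : a ≠ b) (hac : a ≠ c) (hbc : b ≠ c) :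
    ({a, b, c} : Finset ℕ).card = 3 := by
  rw [Finset.card_insert_of_notMem (by simp [hab, hac]),
    Finset.card_insert_of_notMem (by simp [hbc]), Finset.card_singleton]

lemma four_nbrs {H : SimpleGraph Vt} {x a b c d : Vt}
    (hab : a ≠ b) (hac : a ≠ c) (had : a ≠ d) (hbc : b ≠ c) (hbd : b ≠ d) (hcd : c ≠ d)
    (h1 : H.Adj x a) (h2 : H.Adj x b) (h3 : H.Adj x c) (h4 : H.Adj x d) :
    4 ≤ (H.neighborSet x).ncard := by
  have hsub : ({a, b, c, d} : Set Vt) ⊆ H.neighborSet x := by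
    intro z hz
    simp only [Set.mem_insert_iff, Set.mem_singleton_iff] at hz
    rcases hz with rfl | rfl | rfl | rfl
    exacts [h1, h2, h3, h4]
  have h4c : ({a, b, c, d} : Set Vt).ncard = 4 := by
    rw [Set.ncard_insert_of_notMem (by simp [hab, hac, had]) (Set.toFinite _),
      Set.ncard_insert_of_notMem (by simp [hbc, hbd]) (Set.toFinite _),
      Set.ncard_insert_of_notMem (by simp [hcd]) (Set.toFinite _), Set.ncard_singleton]
  have := Set.ncard_le_ncard hsub (Set.toFinite _)
  omega

section Kill
variable {H : SimpleGraph Vt}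

/-- surviving edge inside the copy gives an edge of `G1 \ H`. -/
lemma liveEdge {i t} {m m' : Fin 11} (h : J3.Adj m m')
    (hH : ¬ H.Adj (W i t m) (W i t m')) : (G1 \ H).Adj (W i t m) (W i t m') := by
  rw [SimpleGraph.sdiff_adj]
  exact ⟨liftAdj i t h, hH⟩

/-- kill certificate via a surviving "path" edge `x y`, both ends adjacent to `a` and `b`. -/
lemma killA (i t) (x y : Fin 11) (hx2 : 2 ≤ x.val) (hy2 : 2 ≤ y.val)
    (j0x : J3.Adj 0 x) (j1x : J3.Adj 1 x) (j0y : J3.Adj 0 y) (j1y : J3.Adj 1 y)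
    (jxy : J3.Adj x y)
    (hA : ∀ m : Fin 11, 1 ≤ m.val → ¬ H.Adj uu (W i t m))
    (hB : ∀ m : Fin 11, 2 ≤ m.val → ¬ H.Adj (vv i) (W i t m))
    (hxy : ¬ H.Adj (W i t x) (W i t y))
    (α β : ℕ) (hα : α = 1 ∨ α = 2 ∨ α = 3) (hβ : β = 1 ∨ β = 2 ∨ β = 3) (hne : α ≠ β) :
    ∃ o : Fin 11 → Finset ℕ, (∀ m, (o m).card = 3) ∧
      ∀ φ : Vt → ℕ, (∀ m : Fin 11, 2 ≤ m.val → φ (W i t m) ∈ o m) →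
        (∀ ⦃z w : Vt⦄, (G1 \ H).Adj z w → φ z ≠ φ w) → φ uu = α → φ (vv i) = β → False := by
  refine ⟨fun _ => {1, 2, 3}, fun _ => rfl, ?_⟩
  intro φ hmem hprop hu hv
  have exy := hprop (liveEdge jxy hxy)
  have eux := hprop (liveEdge (i := i) (t := t) (m := 0) j0x (hA x (by omega)))
  have evx := hprop (liveEdge (i := i) (t := t) (m := 1) j1x (hB x hx2))
  have euy := hprop (liveEdge (i := i) (t := t) (m := 0) j0y (hA y (by omega)))
  have evy := hprop (liveEdge (i := i) (t := t) (m := 1) j1y (hB y hy2))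
  rw [W_zero, hu] at eux euy
  rw [W_one, hv] at evx evy
  have hx := hmem x hx2
  have hy := hmem y hy2
  simp only [Finset.mem_insert, Finset.mem_singleton] at hx hy
  omega

/-- kill certificate via a surviving double spoke at `s`, where `s` is adjacent to `a`. -/
lemma killB_a (i t) (s p q : Fin 11) (hs2 : 2 ≤ s.val) (hp2 : 2 ≤ p.val) (hq2 : 2 ≤ q.val)
    (hqp : q ≠ p) (hsp : s ≠ p) (hsq : s ≠ q)
    (j0p : J3.Adj 0 p) (j1p : J3.Adj 1 p) (j0q : J3.Adj 0 q) (j1q : J3.Adj 1 q)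
    (j0s : J3.Adj 0 s) (jsp : J3.Adj s p) (jsq : J3.Adj s q)
    (hA : ∀ m : Fin 11, 1 ≤ m.val → ¬ H.Adj uu (W i t m))
    (hB : ∀ m : Fin 11, 2 ≤ m.val → ¬ H.Adj (vv i) (W i t m))
    (hHsp : ¬ H.Adj (W i t s) (W i t p)) (hHsq : ¬ H.Adj (W i t s) (W i t q))
    (α β : ℕ) (hα : α = 1 ∨ α = 2 ∨ α = 3) (hβ : β = 1 ∨ β = 2 ∨ β = 3) (hne : α ≠ β) :
    ∃ o : Fin 11 → Finset ℕ, (∀ m, (o m).card = 3) ∧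
      ∀ φ : Vt → ℕ, (∀ m : Fin 11, 2 ≤ m.val → φ (W i t m) ∈ o m) →
        (∀ ⦃z w : Vt⦄, (G1 \ H).Adj z w → φ z ≠ φ w) → φ uu = α → φ (vv i) = β → False := by
  refine ⟨fun m => if m = p then {α, β, 4} else if m = q then {α, β, 5}
    else if m = s then {α, 4, 5} else {1, 2, 3}, ?_, ?_⟩
  · have bα : 1 ≤ α ∧ α ≤ 3 := by rcases hα with rfl | rfl | rfl <;> omega
    have bβ : 1 ≤ β ∧ β ≤ 3 := by rcases hβ with rfl | rfl | rfl <;> omega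
    intro m
    dsimp only
    by_cases h1 : m = p
    · subst h1; rw [if_pos rfl]; exact card3 hne (by omega) (by omega)
    by_cases h2 : m = q
    · subst h2; rw [if_neg hqp, if_pos rfl]; exact card3 hne (by omega) (by omega)
    by_cases h3 : m = s
    · subst h3; rw [if_neg hsp, if_neg hsq, if_pos rfl]
      exact card3 (by omega) (by omega) (by omega)
    · rw [if_neg h1, if_neg h2, if_neg h3]; rfl
  intro φ hmem hprop hu hv
  have eup := hprop (liveEdge (i := i) (t := t) (m := 0) j0p (hA p (by omega)))
  have evp := hprop (liveEdge (i := i) (t := t) (m := 1) j1p (hB p hp2))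
  have euq := hprop (liveEdge (i := i) (t := t) (m := 0) j0q (hA q (by omega)))
  have evq := hprop (liveEdge (i := i) (t := t) (m := 1) j1q (hB q hq2))
  have eus := hprop (liveEdge (i := i) (t := t) (m := 0) j0s (hA s (by omega)))
  have esp := hprop (liveEdge jsp hHsp)
  have esq := hprop (liveEdge jsq hHsq)
  rw [W_zero, hu] at eup euq eus
  rw [W_one, hv] at evp evq
  have hp := hmem p hp2
  have hq := hmem q hq2
  have hs := hmem s hs2
  dsimp only at hp hq hs
  rw [if_pos rfl] at hp
  rw [if_neg hqp, if_pos rfl] at hq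
  rw [if_neg hsp, if_neg hsq, if_pos rfl] at hs
  simp only [Finset.mem_insert, Finset.mem_singleton] at hp hq hs
  have bα : 1 ≤ α ∧ α ≤ 3 := by rcases hα with rfl | rfl | rfl <;> omega
  have bβ : 1 ≤ β ∧ β ≤ 3 := by rcases hβ with rfl | rfl | rfl <;> omega
  omega

/-- kill certificate via a surviving double spoke at `s`, where `s` is adjacent to `b`. -/
lemma killB_b (i t) (s p q : Fin 11) (hs2 : 2 ≤ s.val) (hp2 : 2 ≤ p.val) (hq2 : 2 ≤ q.val)
    (hqp : q ≠ p) (hsp : s ≠ p) (hsq : s ≠ q)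
    (j0p : J3.Adj 0 p) (j1p : J3.Adj 1 p) (j0q : J3.Adj 0 q) (j1q : J3.Adj 1 q)
    (j1s : J3.Adj 1 s) (jsp : J3.Adj s p) (jsq : J3.Adj s q)
    (hA : ∀ m : Fin 11, 1 ≤ m.val → ¬ H.Adj uu (W i t m))
    (hB : ∀ m : Fin 11, 2 ≤ m.val → ¬ H.Adj (vv i) (W i t m))
    (hHsp : ¬ H.Adj (W i t s) (W i t p)) (hHsq : ¬ H.Adj (W i t s) (W i t q))
    (α β : ℕ) (hα : α = 1 ∨ α = 2 ∨ α = 3) (hβ : β = 1 ∨ β = 2 ∨ β = 3) (hne : α ≠ β) :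
    ∃ o : Fin 11 → Finset ℕ, (∀ m, (o m).card = 3) ∧
      ∀ φ : Vt → ℕ, (∀ m : Fin 11, 2 ≤ m.val → φ (W i t m) ∈ o m) →
        (∀ ⦃z w : Vt⦄, (G1 \ H).Adj z w → φ z ≠ φ w) → φ uu = α → φ (vv i) = β → False := by
  refine ⟨fun m => if m = p then {α, β, 4} else if m = q then {α, β, 5}
    else if m = s then {β, 4, 5} else {1, 2, 3}, ?_, ?_⟩
  · have bα : 1 ≤ α ∧ α ≤ 3 := by rcases hα with rfl | rfl | rfl <;> omega
    have bβ : 1 ≤ β ∧ β ≤ 3 := by rcases hβ with rfl | rfl | rfl <;> omega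
    intro m
    dsimp only
    by_cases h1 : m = p
    · subst h1; rw [if_pos rfl]; exact card3 hne (by omega) (by omega)
    by_cases h2 : m = q
    · subst h2; rw [if_neg hqp, if_pos rfl]; exact card3 hne (by omega) (by omega)
    by_cases h3 : m = s
    · subst h3; rw [if_neg hsp, if_neg hsq, if_pos rfl]
      exact card3 (by omega) (by omega) (by omega)
    · rw [if_neg h1, if_neg h2, if_neg h3]; rfl
  intro φ hmem hprop hu hv
  have eup := hprop (liveEdge (i := i) (t := t) (m := 0) j0p (hA p (by omega)))
  have evp := hprop (liveEdge (i := i) (t := t) (m := 1) j1p (hB p hp2))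
  have euq := hprop (liveEdge (i := i) (t := t) (m := 0) j0q (hA q (by omega)))
  have evq := hprop (liveEdge (i := i) (t := t) (m := 1) j1q (hB q hq2))
  have evs := hprop (liveEdge (i := i) (t := t) (m := 1) j1s (hB s hs2))
  have esp := hprop (liveEdge jsp hHsp)
  have esq := hprop (liveEdge jsq hHsq)
  rw [W_zero, hu] at eup euq
  rw [W_one, hv] at evp evq evs
  have hp := hmem p hp2
  have hq := hmem q hq2
  have hs := hmem s hs2
  dsimp only at hp hq hs
  rw [if_pos rfl] at hp
  rw [if_neg hqp, if_pos rfl] at hq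
  rw [if_neg hsp, if_neg hsq, if_pos rfl] at hs
  simp only [Finset.mem_insert, Finset.mem_singleton] at hp hq hs
  have bα : 1 ≤ α ∧ α ≤ 3 := by rcases hα with rfl | rfl | rfl <;> omega
  have bβ : 1 ≤ β ∧ β ≤ 3 := by rcases hβ with rfl | rfl | rfl <;> omega
  omega

end Kill

section Copy
variable {H : SimpleGraph Vt}

lemma copyKill (i : Fin 4) (t : Fin 9)
    (hdeg : ∀ v, (H.neighborSet v).ncard ≤ 3)
    (hA : ∀ m : Fin 11, 1 ≤ m.val → ¬ H.Adj uu (W i t m))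
    (hB : ∀ m : Fin 11, 2 ≤ m.val → ¬ H.Adj (vv i) (W i t m))
    (α β : ℕ) (hα : α = 1 ∨ α = 2 ∨ α = 3) (hβ : β = 1 ∨ β = 2 ∨ β = 3) (hne : α ≠ β) :
    ∃ o : Fin 11 → Finset ℕ, (∀ m, (o m).card = 3) ∧
      ∀ φ : Vt → ℕ, (∀ m : Fin 11, 2 ≤ m.val → φ (W i t m) ∈ o m) →
        (∀ ⦃z w : Vt⦄, (G1 \ H).Adj z w → φ z ≠ φ w) → φ uu = α → φ (vv i) = β → False := by
  have wne : ∀ m m' : Fin 11, m ≠ m' → W i t m ≠ W i t m' :=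
    fun m m' h he => h (W_inj i t he)
  by_cases h23 : H.Adj (W i t 2) (W i t 3)
  swap
  · exact killA i t 2 3 (by omega) (by omega) (by decide) (by decide) (by decide) (by decide)
      (by decide) hA hB h23 α β hα hβ hne
  by_cases h34 : H.Adj (W i t 3) (W i t 4)
  swap
  · exact killA i t 3 4 (by omega) (by omega) (by decide) (by decide) (by decide) (by decide)
      (by decide) hA hB h34 α β hα hβ hne
  by_cases h45 : H.Adj (W i t 4) (W i t 5)
  swap
  · exact killA i t 4 5 (by omega) (by omega) (by decide) (by decide) (by decide) (by decide)
      (by decide) hA hB h45 α β hα hβ hne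
  by_cases h56 : H.Adj (W i t 5) (W i t 6)
  swap
  · exact killA i t 5 6 (by omega) (by omega) (by decide) (by decide) (by decide) (by decide)
      (by decide) hA hB h56 α β hα hβ hne
  -- all four path edges are deleted; find a surviving double spoke
  have hd : ¬ H.Adj (W i t 3) (W i t 7) ∨ ¬ H.Adj (W i t 3) (W i t 9) := by
    by_contra hcon
    push_neg at hcon
    have h4 := four_nbrs (wne 2 4 (by decide)) (wne 2 7 (by decide)) (wne 2 9 (by decide))
      (wne 4 7 (by decide)) (wne 4 9 (by decide)) (wne 7 9 (by decide))
      h23.symm h34 hcon.1 hcon.2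
    have := hdeg (W i t 3); omega
  have hf : ¬ H.Adj (W i t 5) (W i t 8) ∨ ¬ H.Adj (W i t 5) (W i t 10) := by
    by_contra hcon
    push_neg at hcon
    have h4 := four_nbrs (wne 4 6 (by decide)) (wne 4 8 (by decide)) (wne 4 10 (by decide))
      (wne 6 8 (by decide)) (wne 6 10 (by decide)) (wne 8 10 (by decide))
      h45.symm h56 hcon.1 hcon.2
    have := hdeg (W i t 5); omega
  have he : ∀ x y : Fin 11, x = 7 ∨ x = 8 ∨ x = 9 ∨ x = 10 → y = 7 ∨ y = 8 ∨ y = 9 ∨ y = 10 →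
      x ≠ y → ¬ H.Adj (W i t 4) (W i t x) ∨ ¬ H.Adj (W i t 4) (W i t y) := by
    intro x y hx hy hxy
    by_contra hcon
    push_neg at hcon
    have hx3 : x ≠ 3 := by rcases hx with rfl | rfl | rfl | rfl <;> decide
    have hx5 : x ≠ 5 := by rcases hx with rfl | rfl | rfl | rfl <;> decide
    have hy3 : y ≠ 3 := by rcases hy with rfl | rfl | rfl | rfl <;> decide
    have hy5 : y ≠ 5 := by rcases hy with rfl | rfl | rfl | rfl <;> decide
    have h4 := four_nbrs (wne 3 5 (by decide)) (wne 3 x (Ne.symm hx3)) (wne 3 y (Ne.symm hy3))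
      (wne 5 x (Ne.symm hx5)) (wne 5 y (Ne.symm hy5)) (wne x y hxy)
      h34.symm h45 hcon.1 hcon.2
    have := hdeg (W i t 4); omega
  rcases hd with hd | hd
  · rcases hf with hf | hf
    · rcases he 7 8 (by tauto) (by tauto) (by decide) with h | h
      · exact killB_a i t 7 3 4 (by omega) (by omega) (by omega) (by decide) (by decide)
          (by decide) (by decide) (by decide) (by decide) (by decide) (by decide) (by decide)
          (by decide) hA hB (fun x => hd x.symm) (fun x => h x.symm) α β hα hβ hne
      · exact killB_a i t 8 4 5 (by omega) (by omega) (by omega) (by decide) (by decide)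
          (by decide) (by decide) (by decide) (by decide) (by decide) (by decide) (by decide)
          (by decide) hA hB (fun x => h x.symm) (fun x => hf x.symm) α β hα hβ hne
    · rcases he 7 10 (by tauto) (by tauto) (by decide) with h | h
      · exact killB_a i t 7 3 4 (by omega) (by omega) (by omega) (by decide) (by decide)
          (by decide) (by decide) (by decide) (by decide) (by decide) (by decide) (by decide)
          (by decide) hA hB (fun x => hd x.symm) (fun x => h x.symm) α β hα hβ hne
      · exact killB_b i t 10 4 5 (by omega) (by omega) (by omega) (by decide) (by decide)
          (by decide) (by decide) (by decide) (by decide) (by decide) (by decide) (by decide)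
          (by decide) hA hB (fun x => h x.symm) (fun x => hf x.symm) α β hα hβ hne
  · rcases hf with hf | hf
    · rcases he 9 8 (by tauto) (by tauto) (by decide) with h | h
      · exact killB_b i t 9 3 4 (by omega) (by omega) (by omega) (by decide) (by decide)
          (by decide) (by decide) (by decide) (by decide) (by decide) (by decide) (by decide)
          (by decide) hA hB (fun x => hd x.symm) (fun x => h x.symm) α β hα hβ hne
      · exact killB_a i t 8 4 5 (by omega) (by omega) (by omega) (by decide) (by decide)
          (by decide) (by decide) (by decide) (by decide) (by decide) (by decide) (by decide)
          (by decide) hA hB (fun x => h x.symm) (fun x => hf x.symm) α β hα hβ hne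
    · rcases he 9 10 (by tauto) (by tauto) (by decide) with h | h
      · exact killB_b i t 9 3 4 (by omega) (by omega) (by omega) (by decide) (by decide)
          (by decide) (by decide) (by decide) (by decide) (by decide) (by decide) (by decide)
          (by decide) hA hB (fun x => hd x.symm) (fun x => h x.symm) α β hα hβ hne
      · exact killB_b i t 10 4 5 (by omega) (by omega) (by omega) (by decide) (by decide)
          (by decide) (by decide) (by decide) (by decide) (by decide) (by decide) (by decide)
          (by decide) hA hB (fun x => h x.symm) (fun x => hf x.symm) α β hα hβ hne

end Copy

def zi : Vt → Option (Fin 4)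
  | Sum.inl (Sum.inl _) => none
  | Sum.inl (Sum.inr i) => some i
  | Sum.inr (i, _) => some i

def P6 : Fin 6 → ℕ × ℕ := ![(1,2),(1,3),(2,1),(2,3),(3,1),(3,2)]

lemma pairIndex (α β : ℕ) (hα : α = 1 ∨ α = 2 ∨ α = 3) (hβ : β = 1 ∨ β = 2 ∨ β = 3)
    (hne : α ≠ β) : ∃ s : Fin 6, P6 s = (α, β) := by
  rcases hα with rfl | rfl | rfl <;> rcases hβ with rfl | rfl | rfl
  exacts [absurd rfl hne, ⟨0, rfl⟩, ⟨1, rfl⟩, ⟨2, rfl⟩, absurd rfl hne, ⟨3, rfl⟩,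
    ⟨4, rfl⟩, ⟨5, rfl⟩, absurd rfl hne]

noncomputable def LL (i₀ : Fin 4) (ass : Fin 6 → Fin 9) (O : Fin 6 → Fin 11 → Finset ℕ) : Vt → Finset ℕ
  | Sum.inr (i, t, mm) =>
      if h : ∃ s : Fin 6, ass s = t ∧ i = i₀ then
        O (Classical.choose h) ⟨mm.val + 2, by have := mm.isLt; omega⟩
      else {1, 2, 3}
  | Sum.inl _ => {1, 2, 3}

lemma LL_inl (i₀ ass O x) : LL i₀ ass O (Sum.inl x) = {1, 2, 3} := rfl

lemma LL_inr (i₀ ass O i t mm) : LL i₀ ass O (Sum.inr (i, t, mm)) =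
    if h : ∃ s : Fin 6, ass s = t ∧ i = i₀ then
      O (Classical.choose h) ⟨mm.val + 2, by have := mm.isLt; omega⟩
    else {1, 2, 3} := rfl

lemma LL_copy (i₀ ass O) (hinj : Function.Injective ass) (s : Fin 6) (m : Fin 11)
    (hm : 2 ≤ m.val) : LL i₀ ass O (W i₀ (ass s) m) = O s m := by
  rw [W_inr _ _ _ hm, LL_inr]
  have hex : ∃ s' : Fin 6, ass s' = ass s ∧ i₀ = i₀ := ⟨s, rfl, rfl⟩
  rw [dif_pos hex, show Classical.choose hex = s from hinj (Classical.choose_spec hex).1]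
  congr 1
  exact Fin.ext (by simp; omega)

lemma step1 {H : SimpleGraph Vt} (hdeg : ∀ v, (H.neighborSet v).ncard ≤ 3) :
    ∃ i₀ : Fin 4, ∀ w, H.Adj uu w → zi w ≠ some i₀ := by
  by_contra hcon
  push_neg at hcon
  choose w hw hz using hcon
  have key : ∀ a b : Fin 4, a ≠ b → w a ≠ w b := by
    intro a b hab he
    apply hab
    have h1 := hz a
    rw [he, hz b] at h1
    exact Option.some.inj h1.symm
  have h4 := four_nbrs (key 0 1 (by decide)) (key 0 2 (by decide)) (key 0 3 (by decide))
    (key 1 2 (by decide)) (key 1 3 (by decide)) (key 2 3 (by decide))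
    (hw 0) (hw 1) (hw 2) (hw 3)
  have := hdeg uu
  omega

/-- For every subgraph `H` of `G1` with maximum degree at most 3, the graph `G1 − E(H)`
is not 3-choosable. -/
theorem statement4 (H : SimpleGraph (Sum (Sum Unit (Fin 4)) (Fin 4 × (Fin 9 × Fin 9))))
    (hle : H ≤ G1) (hdeg : ∀ v, (H.neighborSet v).ncard ≤ 3) :
    ¬ Choosable (G1 \ H) 3 := by
  intro hch
  classical
  obtain ⟨i₀, hzone⟩ := step1 hdeg
  have hA : ∀ t, ∀ m : Fin 11, 1 ≤ m.val → ¬ H.Adj uu (W i₀ t m) := by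
    intro t m hm hadj
    apply hzone _ hadj
    rcases Nat.lt_or_ge m.val 2 with h | h
    · have hm1 : m = 1 := Fin.ext (by omega)
      subst hm1; rfl
    · rw [W_inr _ _ _ h]; rfl
  have hono : ¬ H.Adj uu (vv i₀) := fun h => hzone _ h rfl
  set D : Finset (Fin 9) := Finset.univ.filter
    (fun t => ∃ m : Fin 11, 2 ≤ m.val ∧ H.Adj (vv i₀) (W i₀ t m)) with hD
  have hD3 : D.card ≤ 3 := by
    have hmaps : ∀ t ∈ D, (if h : ∃ m : Fin 11, 2 ≤ m.val ∧ H.Adj (vv i₀) (W i₀ t m)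
        then W i₀ t (Classical.choose h) else uu)
          ∈ (H.neighborSet (vv i₀)).toFinite.toFinset := by
      intro t ht
      rw [hD, Finset.mem_filter] at ht
      rw [dif_pos ht.2, Set.Finite.mem_toFinset]
      exact (Classical.choose_spec ht.2).2
    have hinj : Set.InjOn (fun t => (if h : ∃ m : Fin 11, 2 ≤ m.val ∧ H.Adj (vv i₀) (W i₀ t m)
        then W i₀ t (Classical.choose h) else uu)) D := by
      intro t ht t' ht' hfe
      rw [Finset.mem_coe, hD, Finset.mem_filter] at ht ht'
      simp only [dif_pos ht.2, dif_pos ht'.2] at hfe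
      have h2 := (Classical.choose_spec ht.2).1
      have h2' := (Classical.choose_spec ht'.2).1
      rw [W_inr _ _ _ h2, W_inr _ _ _ h2'] at hfe
      simp only [Sum.inr.injEq, Prod.mk.injEq] at hfe
      exact hfe.2.1
    have hcard := Finset.card_le_card_of_injOn _ hmaps hinj
    have hnc := Set.ncard_eq_toFinset_card (H.neighborSet (vv i₀)) (Set.toFinite _)
    have := hdeg (vv i₀)
    omega
  obtain ⟨T, hTsub, hT6⟩ := Finset.exists_subset_card_eq (s := Finset.univ \ D) (n := 6) (by
    rw [Finset.card_sdiff_of_subset (Finset.subset_univ D)]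
    simp only [Finset.card_univ, Fintype.card_fin]
    omega)
  let ass : Fin 6 → Fin 9 := fun s => (T.orderIsoOfFin hT6 s : Fin 9)
  have hassinj : Function.Injective ass :=
    fun a b h => (T.orderIsoOfFin hT6).injective (Subtype.ext h)
  have hassmem : ∀ s, ass s ∈ T := fun s => (T.orderIsoOfFin hT6 s).2
  have hBclean : ∀ s, ∀ m : Fin 11, 2 ≤ m.val → ¬ H.Adj (vv i₀) (W i₀ (ass s) m) := by
    intro s m hm hadj
    have hmemT := hTsub (hassmem s)
    rw [Finset.mem_sdiff] at hmemT
    exact hmemT.2 (by rw [hD, Finset.mem_filter]; exact ⟨Finset.mem_univ _, ⟨m, hm, hadj⟩⟩)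
  have cert : ∀ s : Fin 6, ∃ o : Fin 11 → Finset ℕ, (∀ m, (o m).card = 3) ∧
      ∀ φ : Vt → ℕ, (∀ m : Fin 11, 2 ≤ m.val → φ (W i₀ (ass s) m) ∈ o m) →
        (∀ ⦃z w : Vt⦄, (G1 \ H).Adj z w → φ z ≠ φ w) →
          φ uu = (P6 s).1 → φ (vv i₀) = (P6 s).2 → False :=
    fun s => copyKill i₀ (ass s) hdeg (hA (ass s)) (hBclean s) (P6 s).1 (P6 s).2
      (by fin_cases s <;> decide) (by fin_cases s <;> decide) (by fin_cases s <;> decide)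
  choose O hOcard hOkill using cert
  obtain ⟨φ, hmem, hprop⟩ := hch (LL i₀ ass O) (by
    intro w
    rcases w with x | ⟨i, t, mm⟩
    · rfl
    · rw [LL_inr]
      split
      · exact hOcard _ _
      · rfl)
  have huv : φ uu ≠ φ (vv i₀) := hprop (by
    rw [SimpleGraph.sdiff_adj]
    constructor
    · have := liftAdj i₀ 0 (show J3.Adj 0 1 by decide)
      rwa [W_zero, W_one] at this
    · exact hono)
  have hu := hmem uu
  have hv := hmem (vv i₀)
  rw [show LL i₀ ass O uu = {1, 2, 3} from rfl] at hu
  rw [show LL i₀ ass O (vv i₀) = {1, 2, 3} from rfl] at hv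
  simp only [Finset.mem_insert, Finset.mem_singleton] at hu hv
  obtain ⟨s, hs⟩ := pairIndex (φ uu) (φ (vv i₀)) hu hv huv
  apply hOkill s φ ?_ hprop ?_ ?_
  · intro m hm
    have := hmem (W i₀ (ass s) m)
    rwa [LL_copy i₀ ass O hassinj s m hm] at this
  · rw [hs]
  · rw [hs]
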